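/- arXiv:1807.00321 — 2 statements merged into one kernel-verified Lean document; each statement's English description precedes it below -/
import Mathlib

section
/- Let K ⊆ ℝⁿ be a nonempty closed convex set and P a polynomial map of degree d. If Sol(K^∞, P^∞) = {0}, then there exists ε > 0 such that the set ∪_{Q : ‖Q‖ < ε} Sol(K, P+Q), where Q ranges over polynomial maps of degree at most d with coefficient norm less than ε, is bounded; in particular Sol(K, P+Q) is bounded for every such Q. -/
open scoped RealInnerProductSpace
open MvPolynomial Bornology

/-- Solution set of the variational inequality VI(K,F). -/
def Sol {n : ℕ} (K : Set (EuclideanSpace ℝ (Fin n)))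
    (F : EuclideanSpace ℝ (Fin n) → EuclideanSpace ℝ (Fin n)) :
    Set (EuclideanSpace ℝ (Fin n)) :=
  {x | x ∈ K ∧ ∀ y ∈ K, 0 ≤ ⟪F x, y - x⟫}

/-- Dual cone of a set. -/
def dualCone {n : ℕ} (C : Set (EuclideanSpace ℝ (Fin n))) :
    Set (EuclideanSpace ℝ (Fin n)) :=
  {q | ∀ v ∈ C, 0 ≤ ⟪q, v⟫}

/-- Recession (asymptotic) cone of a closed convex set. -/
def recessionCone {n : ℕ} (K : Set (EuclideanSpace ℝ (Fin n))) :
    Set (EuclideanSpace ℝ (Fin n)) :=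
  {v | ∀ x ∈ K, ∀ t : ℝ, 0 ≤ t → x + t • v ∈ K}

/-- Evaluation of a vector of polynomials as a map ℝⁿ → ℝⁿ. -/
noncomputable def evalMap {n : ℕ} (Q : Fin n → MvPolynomial (Fin n) ℝ)
    (x : EuclideanSpace ℝ (Fin n)) : EuclideanSpace ℝ (Fin n) :=
  WithLp.toLp 2 (fun i => MvPolynomial.eval (fun j => x j) (Q i))

/-- Leading term: the degree-`d` homogeneous component of each coordinate. -/
noncomputable def leadTerm {n : ℕ} (d : ℕ) (P : Fin n → MvPolynomial (Fin n) ℝ) :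
    Fin n → MvPolynomial (Fin n) ℝ :=
  fun i => MvPolynomial.homogeneousComponent d (P i)

/-- Frobenius norm of the coefficients of a polynomial map. -/
noncomputable def pnorm {n : ℕ} (Q : Fin n → MvPolynomial (Fin n) ℝ) : ℝ :=
  Real.sqrt (∑ i, ∑ m ∈ (Q i).support, ((Q i).coeff m) ^ 2)

section Aux

open Filter Topology

lemma abs_coeff_le_pnorm {n : ℕ} (Q : Fin n → MvPolynomial (Fin n) ℝ) (i : Fin n)
    (m : Fin n →₀ ℕ) : |(Q i).coeff m| ≤ pnorm Q := by
  rw [← Real.sqrt_sq_eq_abs]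
  apply Real.sqrt_le_sqrt
  by_cases hm : m ∈ (Q i).support
  · calc ((Q i).coeff m) ^ 2
        ≤ ∑ m' ∈ (Q i).support, ((Q i).coeff m') ^ 2 :=
        Finset.single_le_sum (f := fun m' => ((Q i).coeff m') ^ 2) (fun _ _ => sq_nonneg _) hm
      _ ≤ ∑ i', ∑ m' ∈ (Q i').support, ((Q i').coeff m') ^ 2 :=
        Finset.single_le_sum (f := fun i' => ∑ m' ∈ (Q i').support, ((Q i').coeff m') ^ 2)
          (fun _ _ => Finset.sum_nonneg fun _ _ => sq_nonneg _) (Finset.mem_univ i)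
  · rw [notMem_support_iff.mp hm]
    have h0 : (0:ℝ)^2 = 0 := by norm_num
    rw [h0]
    exact Finset.sum_nonneg fun _ _ => Finset.sum_nonneg fun _ _ => sq_nonneg _

lemma support_subset_Iic {n d : ℕ} {p : MvPolynomial (Fin n) ℝ} (h : p.totalDegree ≤ d) :
    p.support ⊆ Finset.Iic (Finsupp.equivFunOnFinite.symm (fun _ => d)) := by
  intro m hm
  rw [Finset.mem_Iic]
  intro j
  calc m j ≤ m.degree := Finsupp.le_degree j m
    _ ≤ p.totalDegree := by
        rw [MvPolynomial.totalDegree]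
        exact Finset.le_sup (f := fun m => m.sum fun _ e => e) hm
    _ ≤ d := h

lemma eval_abs_le {n d : ℕ} {p : MvPolynomial (Fin n) ℝ} (h : p.totalDegree ≤ d)
    {B : ℝ} (hB : ∀ m, |p.coeff m| ≤ B)
    (x : EuclideanSpace ℝ (Fin n)) (hx : 1 ≤ ‖x‖) :
    |MvPolynomial.eval (fun j => x j) p| ≤
      ((Finset.Iic (Finsupp.equivFunOnFinite.symm (fun _ => d) : Fin n →₀ ℕ)).card : ℝ)
        * B * ‖x‖ ^ d := by
  have hcoord : ∀ j : Fin n, |x j| ≤ ‖x‖ := by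
    intro j
    rw [EuclideanSpace.norm_eq, ← Real.sqrt_sq_eq_abs]
    apply Real.sqrt_le_sqrt
    have := Finset.single_le_sum (f := fun l => ‖x l‖^2) (fun l _ => sq_nonneg _)
      (Finset.mem_univ j)
    simpa [Real.norm_eq_abs, sq_abs] using this
  have hx0 : (0:ℝ) ≤ ‖x‖ := norm_nonneg x
  rw [eval_eq]
  calc |∑ m ∈ p.support, p.coeff m * ∏ j ∈ m.support, x j ^ m j|
      ≤ ∑ m ∈ p.support, |p.coeff m * ∏ j ∈ m.support, x j ^ m j| :=
        Finset.abs_sum_le_sum_abs _ _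
    _ ≤ ∑ m ∈ p.support, B * ‖x‖ ^ d := by
        apply Finset.sum_le_sum
        intro m hm
        rw [abs_mul]
        have h1 : |∏ j ∈ m.support, x j ^ m j| ≤ ‖x‖ ^ d := by
          rw [Finset.abs_prod]
          calc ∏ j ∈ m.support, |x j ^ m j| ≤ ∏ j ∈ m.support, ‖x‖ ^ m j := by
                apply Finset.prod_le_prod (fun _ _ => abs_nonneg _)
                intro j _
                rw [abs_pow]
                exact pow_le_pow_left₀ (abs_nonneg _) (hcoord j) _
            _ = ‖x‖ ^ (∑ j ∈ m.support, m j) := (Finset.prod_pow_eq_pow_sum _ _ _)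
            _ ≤ ‖x‖ ^ d := by
                apply pow_le_pow_right₀ hx
                calc ∑ j ∈ m.support, m j = m.degree := rfl
                  _ ≤ p.totalDegree :=  by
                      rw [MvPolynomial.totalDegree]
                      exact Finset.le_sup (f := fun m => m.sum fun _ e => e) hm
                  _ ≤ d := h
        have hB0 : 0 ≤ B := le_trans (abs_nonneg _) (hB m)
        exact mul_le_mul (hB m) h1 (abs_nonneg _) hB0
    _ = (p.support.card : ℝ) * (B * ‖x‖ ^ d) := by
        rw [Finset.sum_const, nsmul_eq_mul]
    _ ≤ ((Finset.Iic (Finsupp.equivFunOnFinite.symm (fun _ => d) : Fin n →₀ ℕ)).card : ℝ)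
        * (B * ‖x‖ ^ d) := by
        have hB0 : 0 ≤ B := le_trans (abs_nonneg _) (hB 0)
        apply mul_le_mul_of_nonneg_right _ (by positivity)
        exact_mod_cast Finset.card_le_card (support_subset_Iic h)
    _ = ((Finset.Iic (Finsupp.equivFunOnFinite.symm (fun _ => d) : Fin n →₀ ℕ)).card : ℝ)
        * B * ‖x‖ ^ d := by ring

lemma eval_isHomog {n j : ℕ} {p : MvPolynomial (Fin n) ℝ} (h : p.IsHomogeneous j)
    (c : ℝ) (x : Fin n → ℝ) :
    MvPolynomial.eval (fun i => c * x i) p = c ^ j * MvPolynomial.eval x p := by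
  rw [eval_eq, eval_eq, Finset.mul_sum]
  apply Finset.sum_congr rfl
  intro m hm
  have hj : (Finsupp.weight (1 : Fin n → ℕ)) m = j := h (mem_support_iff.mp hm)
  have hdeg : ∑ i ∈ m.support, m i = j := by
    rw [show (1 : Fin n → ℕ) = fun _ => 1 from rfl, ← Finsupp.degree_eq_weight_one] at hj
    exact hj
  simp_rw [mul_pow]
  rw [Finset.prod_mul_distrib, Finset.prod_pow_eq_pow_sum, hdeg]
  ring

lemma key_tendsto {n d : ℕ}
    (p : MvPolynomial (Fin n) ℝ) (hp : p.totalDegree ≤ d)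
    (y : ℕ → EuclideanSpace ℝ (Fin n)) (v : EuclideanSpace ℝ (Fin n))
    (hN : Tendsto (fun k => ‖y k‖) atTop atTop)
    (hu : Tendsto (fun k => (‖y k‖)⁻¹ • y k) atTop (nhds v)) :
    Tendsto (fun k => ((‖y k‖)⁻¹) ^ d * MvPolynomial.eval (fun j => y k j) p)
      atTop (nhds (MvPolynomial.eval (fun j => v j) (homogeneousComponent d p))) := by
  have contE : ∀ j : ℕ, Continuous (fun x : EuclideanSpace ℝ (Fin n) =>
      MvPolynomial.eval (fun l => x l) (homogeneousComponent j p)) := fun j =>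
    (homogeneousComponent j p).continuous_eval.comp
      (continuous_pi fun l => (EuclideanSpace.proj (𝕜 := ℝ) l).continuous)
  have hinv : Tendsto (fun k => (‖y k‖)⁻¹) atTop (nhds 0) := hN.inv_tendsto_atTop
  have hterm : ∀ j ∈ Finset.range (d+1), Tendsto
      (fun k => ((‖y k‖)⁻¹)^(d-j) *
        MvPolynomial.eval (fun l => ((‖y k‖)⁻¹ • y k) l) (homogeneousComponent j p))
      atTop (nhds ((0:ℝ)^(d-j) * MvPolynomial.eval (fun l => v l) (homogeneousComponent j p))) := by
    intro j _
    exact (hinv.pow (d-j)).mul (((contE j).tendsto v).comp hu)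
  have hsumlim := tendsto_finset_sum (Finset.range (d+1)) hterm
  have hsumval : ∑ j ∈ Finset.range (d+1),
      (0:ℝ)^(d-j) * MvPolynomial.eval (fun l => v l) (homogeneousComponent j p)
      = MvPolynomial.eval (fun l => v l) (homogeneousComponent d p) := by
    rw [Finset.sum_eq_single d]
    · simp
    · intro j hj hne
      rw [Finset.mem_range] at hj
      rw [zero_pow (by omega), zero_mul]
    · intro h; exact absurd (Finset.self_mem_range_succ d) h
  rw [hsumval] at hsumlim
  apply hsumlim.congr'
  have hdecomp : (∑ j ∈ Finset.range (d+1), homogeneousComponent j p) = p := by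
    conv_rhs => rw [← sum_homogeneousComponent p]
    exact (Finset.sum_subset (f := fun j => homogeneousComponent j p)
      (Finset.range_subset_range.mpr (Nat.succ_le_succ hp))
      (fun j _ hj => homogeneousComponent_eq_zero j p
        (by rw [Finset.mem_range] at hj; omega))).symm
  filter_upwards [hN.eventually_ge_atTop 1] with k hk
  have hc0 : (0:ℝ) < ‖y k‖ := lt_of_lt_of_le one_pos hk
  have hcne : ‖y k‖ ≠ 0 := ne_of_gt hc0
  have hrep : (fun l => y k l) = fun l => ‖y k‖ * (((‖y k‖)⁻¹ • y k) l) := by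
    funext l
    show y k l = ‖y k‖ * ((‖y k‖)⁻¹ * y k l)
    field_simp
  have heval : MvPolynomial.eval (fun l => y k l) p
      = ∑ j ∈ Finset.range (d+1),
          (‖y k‖)^j * MvPolynomial.eval (fun l => ((‖y k‖)⁻¹ • y k) l)
            (homogeneousComponent j p) := by
    conv_lhs => rw [← hdecomp]
    rw [map_sum]
    apply Finset.sum_congr rfl
    intro j _
    rw [hrep]
    exact eval_isHomog (homogeneousComponent_isHomogeneous j p) _ _
  rw [heval, Finset.mul_sum]
  apply Finset.sum_congr rfl
  intro j hj
  rw [Finset.mem_range] at hj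
  have hpow : ((‖y k‖)⁻¹)^(d-j) = ((‖y k‖)⁻¹)^d * (‖y k‖)^j := by
    have h1 : ((‖y k‖)⁻¹)^d = ((‖y k‖)⁻¹)^(d-j) * ((‖y k‖)⁻¹)^j := by
      rw [← pow_add]; congr 1; omega
    rw [h1, mul_assoc, ← mul_pow, inv_mul_cancel₀ hcne, one_pow, mul_one]
  rw [hpow, mul_assoc]

lemma key_tendsto_q {n d : ℕ}
    (Q : ℕ → Fin n → MvPolynomial (Fin n) ℝ)
    (hQdeg : ∀ k i, ((Q k) i).totalDegree ≤ d)
    (hQ0 : Tendsto (fun k => pnorm (Q k)) atTop (nhds 0))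
    (y : ℕ → EuclideanSpace ℝ (Fin n))
    (hN : Tendsto (fun k => ‖y k‖) atTop atTop) (i : Fin n) :
    Tendsto (fun k => ((‖y k‖)⁻¹) ^ d * MvPolynomial.eval (fun j => y k j) (Q k i))
      atTop (nhds 0) := by
  set M : ℝ := ((Finset.Iic (Finsupp.equivFunOnFinite.symm (fun _ => d) : Fin n →₀ ℕ)).card : ℝ)
  have hM0 : 0 ≤ M := Nat.cast_nonneg _
  have hg : Tendsto (fun k => M * pnorm (Q k)) atTop (nhds 0) := by
    simpa using hQ0.const_mul M
  apply squeeze_zero_norm' _ hg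
  filter_upwards [hN.eventually_ge_atTop 1] with k hk
  have hc0 : (0:ℝ) < ‖y k‖ := lt_of_lt_of_le one_pos hk
  have hcne : ‖y k‖ ≠ 0 := ne_of_gt hc0
  have hb := eval_abs_le (hQdeg k i) (fun m => abs_coeff_le_pnorm (Q k) i m) (y k) hk
  rw [Real.norm_eq_abs, abs_mul, abs_pow, abs_inv, abs_of_pos hc0]
  calc (‖y k‖⁻¹)^d * |MvPolynomial.eval (fun j => y k j) (Q k i)|
      ≤ (‖y k‖⁻¹)^d * (M * pnorm (Q k) * ‖y k‖ ^ d) := by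
        apply mul_le_mul_of_nonneg_left hb (by positivity)
    _ = M * pnorm (Q k) * ((‖y k‖⁻¹ * ‖y k‖) ^ d) := by rw [mul_pow]; ring
    _ = M * pnorm (Q k) := by rw [inv_mul_cancel₀ hcne, one_pow, mul_one]

lemma inner_sum_eq {n : ℕ} (a b : EuclideanSpace ℝ (Fin n)) :
    ⟪a, b⟫ = ∑ i, a i * b i := by
  simp [PiLp.inner_apply, RCLike.inner_apply, conj_trivial]
  exact Finset.sum_congr rfl fun _ _ => mul_comm _ _

end Aux

open Filter Topology

theorem stmt8 {n : ℕ} (K : Set (EuclideanSpace ℝ (Fin n)))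
    (hK : K.Nonempty) (hKc : IsClosed K) (hKconv : Convex ℝ K)
    (d : ℕ) (hd : 0 < d)
    (P : Fin n → MvPolynomial (Fin n) ℝ)
    (hPdeg : ∀ i, (P i).totalDegree ≤ d) (hPd : ∃ i, (P i).totalDegree = d)
    (hR0 : Sol (recessionCone K) (evalMap (leadTerm d P)) = {0}) :
    ∃ ε > (0 : ℝ),
      IsBounded (⋃ Q ∈ {Q : Fin n → MvPolynomial (Fin n) ℝ |
          (∀ i, (Q i).totalDegree ≤ d) ∧ pnorm Q < ε},
        Sol K (evalMap (P + Q))) := by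
  by_contra hcon
  push_neg at hcon
  have H : ∀ k : ℕ, ∃ Q : Fin n → MvPolynomial (Fin n) ℝ,
      (∀ i, (Q i).totalDegree ≤ d) ∧ pnorm Q < 1/(k+1) ∧
      ∃ z, z ∈ Sol K (evalMap (P + Q)) ∧ (k:ℝ) < ‖z‖ := by
    intro k
    have hpos : (0:ℝ) < 1/(k+1) := by positivity
    have hnb := hcon (1/(k+1)) hpos
    rw [isBounded_iff_forall_norm_le] at hnb
    push_neg at hnb
    obtain ⟨z, hzmem, hzn⟩ := hnb k
    simp only [Set.mem_iUnion, Set.mem_setOf_eq] at hzmem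
    obtain ⟨Q, ⟨hQ1, hQ2⟩, hzQ⟩ := hzmem
    exact ⟨Q, hQ1, hQ2, z, hzQ, hzn⟩
  choose Q hQdeg hQnorm x hxSol hxnorm using H
  have hxpos : ∀ k, 0 < ‖x k‖ := fun k => lt_of_le_of_lt (Nat.cast_nonneg k) (hxnorm k)
  have husph : ∀ k, (‖x k‖)⁻¹ • x k ∈ Metric.sphere (0 : EuclideanSpace ℝ (Fin n)) 1 := by
    intro k
    rw [mem_sphere_zero_iff_norm, norm_smul, norm_inv, norm_norm]
    exact inv_mul_cancel₀ (ne_of_gt (hxpos k))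
  obtain ⟨v, hvsph, φ, hφmono, hφlim⟩ :=
    (isCompact_sphere (0 : EuclideanSpace ℝ (Fin n)) 1).tendsto_subseq husph
  set y : ℕ → EuclideanSpace ℝ (Fin n) := fun k => x (φ k) with hy_def
  have hymem : ∀ k, y k ∈ K := fun k => (hxSol (φ k)).1
  have hVI : ∀ k, ∀ z ∈ K, 0 ≤ ⟪evalMap (P + Q (φ k)) (y k), z - y k⟫ :=
    fun k => (hxSol (φ k)).2
  have hN : Tendsto (fun k => ‖y k‖) atTop atTop := by
    exact tendsto_atTop_mono
      (fun k => le_of_lt (lt_of_le_of_lt (Nat.cast_le.mpr hφmono.le_apply) (hxnorm (φ k))))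
      tendsto_natCast_atTop_atTop
  have hulim : Tendsto (fun k => (‖y k‖)⁻¹ • y k) atTop (nhds v) := hφlim
  have hinv : Tendsto (fun k => (‖y k‖)⁻¹) atTop (nhds 0) := hN.inv_tendsto_atTop
  have hQ0 : Tendsto (fun k => pnorm (Q (φ k))) atTop (nhds 0) := by
    refine squeeze_zero (fun k => Real.sqrt_nonneg _) (fun k => ?_)
      tendsto_one_div_add_atTop_nhds_zero_nat
    calc pnorm (Q (φ k)) ≤ 1/((φ k : ℝ)+1) := le_of_lt (hQnorm (φ k))
      _ ≤ 1/((k:ℝ)+1) := by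
        apply one_div_le_one_div_of_le (by positivity)
        have : (k:ℝ) ≤ (φ k : ℝ) := Nat.cast_le.mpr hφmono.le_apply
        linarith
  have hg : ∀ i : Fin n, Tendsto
      (fun k => ((‖y k‖)⁻¹)^d * (evalMap (P + Q (φ k)) (y k) i)) atTop
      (nhds (evalMap (leadTerm d P) v i)) := by
    intro i
    have h1 := key_tendsto (P i) (hPdeg i) y v hN hulim
    have h2 := key_tendsto_q (fun k => Q (φ k)) (fun k i' => hQdeg (φ k) i') hQ0 y hN i
    have h3 := h1.add h2
    rw [add_zero] at h3
    have heq : (fun k => ((‖y k‖)⁻¹)^d * (evalMap (P + Q (φ k)) (y k) i)) =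
        fun k => ((‖y k‖)⁻¹)^d * MvPolynomial.eval (fun j => y k j) (P i)
          + ((‖y k‖)⁻¹)^d * MvPolynomial.eval (fun j => y k j) (Q (φ k) i) := by
      funext k
      show ((‖y k‖)⁻¹)^d * MvPolynomial.eval (fun j => y k j) ((P + Q (φ k)) i) = _
      rw [Pi.add_apply, map_add, mul_add]
    rw [heq]
    exact h3
  have hineq1 : ∀ yr ∈ recessionCone K, 0 ≤ ⟪evalMap (leadTerm d P) v, yr⟫ := by
    intro yr hyr
    have hlim : Tendsto
        (fun k => ∑ i, (((‖y k‖)⁻¹)^d * (evalMap (P + Q (φ k)) (y k) i)) * yr i)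
        atTop (nhds (∑ i, evalMap (leadTerm d P) v i * yr i)) :=
      tendsto_finset_sum _ (fun i _ => (hg i).mul_const (yr i))
    rw [inner_sum_eq]
    refine ge_of_tendsto' hlim (fun k => ?_)
    have hmemK : y k + yr ∈ K := by
      have := hyr (y k) (hymem k) 1 zero_le_one
      rwa [one_smul] at this
    have h0 := hVI k (y k + yr) hmemK
    rw [add_sub_cancel_left, inner_sum_eq] at h0
    have heq : ∑ i, (((‖y k‖)⁻¹)^d * (evalMap (P + Q (φ k)) (y k) i)) * yr i
        = ((‖y k‖)⁻¹)^d * ∑ i, (evalMap (P + Q (φ k)) (y k) i) * yr i := by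
      rw [Finset.mul_sum]; apply Finset.sum_congr rfl; intro i _; ring
    rw [heq]
    exact mul_nonneg (by positivity) h0
  obtain ⟨x₀, hx₀⟩ := hK
  have hineq2 : ⟪evalMap (leadTerm d P) v, v⟫ ≤ 0 := by
    have hlimcoord : ∀ i : Fin n, Tendsto
        (fun k => (‖y k‖)⁻¹ * x₀ i - ((‖y k‖)⁻¹ • y k) i) atTop (nhds (0 - v i)) := by
      intro i
      have := (hinv.mul_const (x₀ i)).sub
        (((EuclideanSpace.proj (𝕜 := ℝ) i).continuous.tendsto v).comp hulim)
      simpa [Function.comp] using this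
    have hlim : Tendsto
        (fun k => ∑ i, (((‖y k‖)⁻¹)^d * (evalMap (P + Q (φ k)) (y k) i))
          * ((‖y k‖)⁻¹ * x₀ i - ((‖y k‖)⁻¹ • y k) i))
        atTop (nhds (∑ i, evalMap (leadTerm d P) v i * (0 - v i))) :=
      tendsto_finset_sum _ (fun i _ => (hg i).mul (hlimcoord i))
    have hge : ∀ k, 0 ≤ ∑ i, (((‖y k‖)⁻¹)^d * (evalMap (P + Q (φ k)) (y k) i))
          * ((‖y k‖)⁻¹ * x₀ i - ((‖y k‖)⁻¹ • y k) i) := by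
      intro k
      have h0 := hVI k x₀ hx₀
      rw [inner_sum_eq] at h0
      have heq : ∑ i, (((‖y k‖)⁻¹)^d * (evalMap (P + Q (φ k)) (y k) i))
          * ((‖y k‖)⁻¹ * x₀ i - ((‖y k‖)⁻¹ • y k) i)
          = ((‖y k‖)⁻¹)^d * (‖y k‖)⁻¹
            * ∑ i, (evalMap (P + Q (φ k)) (y k) i) * ((x₀ - y k) i) := by
        rw [Finset.mul_sum]
        apply Finset.sum_congr rfl
        intro i _
        have h1 : ((‖y k‖)⁻¹ • y k) i = (‖y k‖)⁻¹ * y k i := rfl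
        have h2 : (x₀ - y k) i = x₀ i - y k i := rfl
        rw [h1, h2]; ring
      rw [heq]
      exact mul_nonneg (by positivity) h0
    have hfin := ge_of_tendsto' hlim hge
    rw [inner_sum_eq]
    have heq2 : ∑ i, evalMap (leadTerm d P) v i * (0 - v i)
        = - ∑ i, evalMap (leadTerm d P) v i * v i := by
      rw [← Finset.sum_neg_distrib]
      apply Finset.sum_congr rfl; intro i _; ring
    rw [heq2] at hfin
    linarith
  have hvmem : v ∈ recessionCone K := by
    intro z hz t ht
    have h1 : Tendsto (fun k => (t * (‖y k‖)⁻¹)) atTop (nhds 0) := by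
      simpa using hinv.const_mul t
    have hzk : Tendsto (fun k => (z - (t * (‖y k‖)⁻¹) • z) + t • ((‖y k‖)⁻¹ • y k)) atTop
        (nhds (z + t • v)) := by
      have h2 : Tendsto (fun k => z - (t * (‖y k‖)⁻¹) • z + t • ((‖y k‖)⁻¹ • y k)) atTop
          (nhds (z - (0:ℝ) • z + t • v)) :=
        (tendsto_const_nhds.sub (h1.smul_const z)).add (hulim.const_smul t)
      simpa using h2
    apply hKc.mem_of_tendsto hzk
    filter_upwards [hN.eventually_ge_atTop (max 1 t)] with k hk
    have hc1 : (1:ℝ) ≤ ‖y k‖ := le_trans (le_max_left _ _) hk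
    have hct : t ≤ ‖y k‖ := le_trans (le_max_right _ _) hk
    have hcpos : (0:ℝ) < ‖y k‖ := lt_of_lt_of_le one_pos hc1
    have hs0 : 0 ≤ t * (‖y k‖)⁻¹ := mul_nonneg ht (inv_nonneg.mpr hcpos.le)
    have hs1 : t * (‖y k‖)⁻¹ ≤ 1 := by
      rw [← div_eq_mul_inv]
      exact div_le_one_of_le₀ hct hcpos.le
    have hmem := hKconv hz (hymem k) (by linarith : (0:ℝ) ≤ 1 - t * (‖y k‖)⁻¹) hs0 (by ring)
    have heq : (1 - t * (‖y k‖)⁻¹) • z + (t * (‖y k‖)⁻¹) • y k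
        = (z - (t * (‖y k‖)⁻¹) • z) + t • ((‖y k‖)⁻¹ • y k) := by
      simp only [sub_smul, one_smul, mul_smul]
    rw [heq] at hmem
    exact hmem
  have hvSol : v ∈ Sol (recessionCone K) (evalMap (leadTerm d P)) := by
    refine ⟨hvmem, fun yr hyr => ?_⟩
    rw [inner_sub_right]
    have h1 := hineq1 yr hyr
    linarith
  rw [hR0, Set.mem_singleton_iff] at hvSol
  have hv1 : ‖v‖ = 1 := by simpa using hvsph
  rw [hvSol, norm_zero] at hv1
  norm_num at hv1
end

section
/- Let K ⊆ ℝⁿ be a nonempty closed convex set with 0 ∈ K and P a polynomial map copositive on K. Then the map p ↦ Sol(K, P + p) is upper semicontinuous at every p in the interior of (Sol(K^∞, P^∞))*. -/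
open scoped RealInnerProductSpace
open MvPolynomial Bornology

section Aux

open Filter

/-- eval of a homogeneous polynomial at a scalar multiple. -/
lemma eval_homog_smul {n e : ℕ} {Q : MvPolynomial (Fin n) ℝ} (hQ : Q.IsHomogeneous e)
    (c : ℝ) (x : Fin n → ℝ) :
    eval (fun j => c * x j) Q = c ^ e * eval x Q := by
  rw [eval_eq, eval_eq, Finset.mul_sum]
  refine Finset.sum_congr rfl fun m hm => ?_
  have he : ∑ i ∈ m.support, m i = e := by
    have := hQ (mem_support_iff.mp hm)
    simpa [Finsupp.weight_apply, Finsupp.sum] using this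
  have : ∏ i ∈ m.support, (c * x i) ^ m i
      = c ^ e * ∏ i ∈ m.support, x i ^ m i := by
    simp_rw [mul_pow]
    rw [Finset.prod_mul_distrib, Finset.prod_pow_eq_pow_sum, he]
  rw [this]; ring

lemma sum_homog_eq {n d : ℕ} (Q : MvPolynomial (Fin n) ℝ) (hQ : Q.totalDegree ≤ d) :
    ∑ e ∈ Finset.range (d + 1), homogeneousComponent e Q = Q := by
  have h1 : ∑ e ∈ Finset.range (Q.totalDegree + 1), homogeneousComponent e Q
      = ∑ e ∈ Finset.range (d + 1), homogeneousComponent e Q := by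
    apply Finset.sum_subset (Finset.range_subset_range.mpr (by omega))
    intro e _ he
    simp only [Finset.mem_range, not_lt] at he
    exact homogeneousComponent_eq_zero e Q (by omega)
  rw [← h1, sum_homogeneousComponent]

lemma eval_eq_sum_homog {n d : ℕ} (Q : MvPolynomial (Fin n) ℝ) (hQ : Q.totalDegree ≤ d)
    (x : Fin n → ℝ) :
    eval x Q = ∑ e ∈ Finset.range (d + 1), eval x (homogeneousComponent e Q) := by
  conv_lhs => rw [← sum_homog_eq Q hQ]
  rw [map_sum]

lemma key_scalar {n d : ℕ} (Q : MvPolynomial (Fin n) ℝ) (hQ : Q.totalDegree ≤ d)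
    {w : ℕ → Fin n → ℝ} {v : Fin n → ℝ} {r : ℕ → ℝ}
    (hr : Tendsto r atTop atTop) (hrpos : ∀ k, 0 < r k)
    (hw : Tendsto w atTop (nhds v)) :
    Tendsto (fun k => (r k ^ d)⁻¹ * eval (fun j => r k * w k j) Q)
      atTop (nhds (eval v (homogeneousComponent d Q))) := by
  have heq : ∀ k, (r k ^ d)⁻¹ * eval (fun j => r k * w k j) Q
      = ∑ e ∈ Finset.range (d + 1),
          ((r k)⁻¹) ^ (d - e) * eval (w k) (homogeneousComponent e Q) := by
    intro k
    rw [eval_eq_sum_homog Q hQ, Finset.mul_sum]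
    refine Finset.sum_congr rfl fun e he => ?_
    simp only [Finset.mem_range] at he
    rw [eval_homog_smul (homogeneousComponent_isHomogeneous e Q)]
    have hrk := (hrpos k).ne'
    rw [← mul_assoc]
    congr 1
    rw [inv_pow]
    have hd : d = (d - e) + e := by omega
    rw [hd, pow_add, mul_inv, mul_assoc, inv_mul_cancel₀ (by positivity), mul_one]
    rw [← hd]
  simp_rw [heq]
  have hlim : Tendsto (fun k => (r k)⁻¹) atTop (nhds 0) := hr.inv_tendsto_atTop
  have hcont : ∀ e, Tendsto (fun k => eval (w k) (homogeneousComponent e Q)) atTop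
      (nhds (eval v (homogeneousComponent e Q))) := fun e =>
    ((MvPolynomial.continuous_eval (homogeneousComponent e Q)).tendsto v).comp hw
  have hsum : Tendsto (fun k => ∑ e ∈ Finset.range (d + 1),
      ((r k)⁻¹) ^ (d - e) * eval (w k) (homogeneousComponent e Q)) atTop
      (nhds (∑ e ∈ Finset.range (d + 1),
        (0:ℝ) ^ (d - e) * eval v (homogeneousComponent e Q))) :=
    tendsto_finset_sum _ fun e _ => (hlim.pow _).mul (hcont e)
  convert hsum using 2
  rw [Finset.sum_eq_single_of_mem d (Finset.self_mem_range_succ d)]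
  · simp
  · intro e he hne
    simp only [Finset.mem_range] at he
    rw [zero_pow (by omega), zero_mul]

lemma evalMap_continuous {n : ℕ} (Q : Fin n → MvPolynomial (Fin n) ℝ) :
    Continuous (evalMap Q) := by
  apply (PiLp.continuous_toLp 2 _).comp
  apply continuous_pi
  intro i
  exact (MvPolynomial.continuous_eval (Q i)).comp
    (continuous_pi fun j => (continuous_apply j).comp (PiLp.continuous_ofLp 2 _))

lemma key_vector {n d : ℕ} (P : Fin n → MvPolynomial (Fin n) ℝ)
    (hP : ∀ i, (P i).totalDegree ≤ d)
    {w : ℕ → EuclideanSpace ℝ (Fin n)} {v : EuclideanSpace ℝ (Fin n)} {r : ℕ → ℝ}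
    (hr : Tendsto r atTop atTop) (hrpos : ∀ k, 0 < r k)
    (hw : Tendsto w atTop (nhds v)) :
    Tendsto (fun k => (r k ^ d)⁻¹ • evalMap P (r k • w k)) atTop
      (nhds (evalMap (leadTerm d P) v)) := by
  have h : Tendsto (fun k => WithLp.ofLp ((r k ^ d)⁻¹ • evalMap P (r k • w k))) atTop
      (nhds (WithLp.ofLp (evalMap (leadTerm d P) v))) := by
    apply tendsto_pi_nhds.mpr
    intro i
    exact key_scalar (P i) (hP i) hr hrpos
      (show Tendsto (fun k j => w k j) atTop (nhds fun j => v j) from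
        ((PiLp.continuous_ofLp 2 _).tendsto v).comp hw)
  have := ((PiLp.continuous_toLp 2 _).tendsto _).comp h
  exact this

end Aux

open Filter

theorem stmt12 {n : ℕ} (K : Set (EuclideanSpace ℝ (Fin n)))
    (hK0 : (0 : EuclideanSpace ℝ (Fin n)) ∈ K) (hKc : IsClosed K) (hKconv : Convex ℝ K)
    (d : ℕ) (hd : 0 < d)
    (P : Fin n → MvPolynomial (Fin n) ℝ)
    (hPdeg : ∀ i, (P i).totalDegree ≤ d) (hPd : ∃ i, (P i).totalDegree = d)
    (hcop : ∀ x ∈ K, 0 ≤ ⟪evalMap P x, x⟫)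
    (p : EuclideanSpace ℝ (Fin n))
    (hp : p ∈ interior (dualCone (Sol (recessionCone K) (evalMap (leadTerm d P))))) :
    ∀ V : Set (EuclideanSpace ℝ (Fin n)), IsOpen V →
      Sol K (fun x => evalMap P x + p) ⊆ V →
        ∃ δ > (0 : ℝ), ∀ q : EuclideanSpace ℝ (Fin n), ‖q - p‖ < δ →
          Sol K (fun x => evalMap P x + q) ⊆ V := by
  intro V hV hSolV
  by_contra hcon
  push_neg at hcon
  -- extract sequences q k → p and solutions x k ∉ V
  have hseq : ∀ k : ℕ, ∃ qq xx, ‖qq - p‖ < 1 / ((k : ℝ) + 1) ∧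
      xx ∈ Sol K (fun z => evalMap P z + qq) ∧ xx ∉ V := by
    intro k
    obtain ⟨qq, hq1, hq2⟩ := hcon (1 / ((k : ℝ) + 1)) (by positivity)
    obtain ⟨xx, hx1, hx2⟩ := Set.not_subset.mp hq2
    exact ⟨qq, xx, hq1, hx1, hx2⟩
  choose q x hq hxSol hxV using hseq
  have hxK : ∀ k, x k ∈ K := fun k => (hxSol k).1
  have hVI : ∀ k, ∀ y ∈ K, 0 ≤ ⟪evalMap P (x k) + q k, y - x k⟫ := fun k => (hxSol k).2
  have hqlim : Tendsto q atTop (nhds p) := by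
    rw [tendsto_iff_norm_sub_tendsto_zero]
    exact squeeze_zero (fun k => norm_nonneg _) (fun k => (hq k).le)
      tendsto_one_div_add_atTop_nhds_zero_nat
  -- basic inequalities from taking y = 0 in the VI
  have hineq1 : ∀ k, ⟪evalMap P (x k) + q k, x k⟫ ≤ 0 := by
    intro k
    have h := hVI k 0 hK0
    rw [zero_sub, inner_neg_right] at h
    linarith
  have hqx : ∀ k, ⟪q k, x k⟫ ≤ 0 := by
    intro k
    have h1 := hineq1 k
    rw [inner_add_left] at h1
    have h2 := hcop (x k) (hxK k)
    linarith
  by_cases hbdd : BddAbove (Set.range fun k => ‖x k‖)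
  · -- bounded case : a convergent subsequence with limit in Sol(K, P + p) ⊆ V
    obtain ⟨M, hM⟩ := hbdd
    have hxball : ∀ k, x k ∈ Metric.closedBall (0 : EuclideanSpace ℝ (Fin n)) M := by
      intro k
      simp only [Metric.mem_closedBall, dist_zero_right]
      exact hM ⟨k, rfl⟩
    obtain ⟨a, -, φ, hφmono, hlim⟩ :=
      tendsto_subseq_of_bounded Metric.isBounded_closedBall hxball
    have hqφ : Tendsto (fun k => q (φ k)) atTop (nhds p) :=
      hqlim.comp hφmono.tendsto_atTop
    have haK : a ∈ K := hKc.mem_of_tendsto hlim (Eventually.of_forall fun k => hxK (φ k))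
    have haSol : ∀ y ∈ K, 0 ≤ ⟪evalMap P a + p, y - a⟫ := by
      intro y hy
      have hc : Tendsto (fun k => ⟪evalMap P (x (φ k)) + q (φ k), y - x (φ k)⟫) atTop
          (nhds ⟪evalMap P a + p, y - a⟫) := by
        apply Filter.Tendsto.inner
        · exact (((evalMap_continuous P).tendsto a).comp hlim).add hqφ
        · exact tendsto_const_nhds.sub hlim
      exact ge_of_tendsto hc (Eventually.of_forall fun k => hVI (φ k) y hy)
    have haV : a ∈ V := hSolV ⟨haK, haSol⟩
    have hev : ∀ᶠ k in atTop, x (φ k) ∈ V := hlim.eventually (hV.eventually_mem haV)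
    obtain ⟨k, hk⟩ := hev.exists
    exact hxV (φ k) hk
  · -- unbounded case
    have hfreq : ∀ m : ℕ, ∃ᶠ k in atTop, (m : ℝ) < ‖x k‖ := by
      intro m
      rw [Filter.frequently_atTop]
      intro N
      by_contra h
      push_neg at h
      apply hbdd
      have hsub : (Set.range fun k => ‖x k‖) ⊆
          ((fun k => ‖x k‖) '' Set.Iio N) ∪ Set.Iic (m : ℝ) := by
        rintro - ⟨k, rfl⟩
        by_cases hk : k < N
        · exact Or.inl ⟨k, hk, rfl⟩
        · exact Or.inr (h k (le_of_not_gt hk))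
      exact (((Set.finite_Iio N).image _).bddAbove.union bddAbove_Iic).mono hsub
    obtain ⟨φ, hφmono, hφ⟩ := Filter.extraction_forall_of_frequently hfreq
    set r : ℕ → ℝ := fun k => ‖x (φ k)‖ with hr_def
    have hrpos : ∀ k, 0 < r k := fun k => lt_of_le_of_lt (Nat.cast_nonneg k) (hφ k)
    have hrtop : Tendsto r atTop atTop :=
      tendsto_atTop_mono (fun k => (hφ k).le) tendsto_natCast_atTop_atTop
    set u : ℕ → EuclideanSpace ℝ (Fin n) := fun k => (r k)⁻¹ • x (φ k) with hu_def
    have husph : ∀ k, u k ∈ Metric.sphere (0 : EuclideanSpace ℝ (Fin n)) 1 := by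
      intro k
      simp only [mem_sphere_iff_norm, sub_zero, hu_def, norm_smul, norm_inv, norm_norm]
      rw [Real.norm_eq_abs, abs_of_pos (hrpos k)]
      exact inv_mul_cancel₀ (hrpos k).ne'
    obtain ⟨v, hvsph, ψ, hψmono, hWlim⟩ :=
      (isCompact_sphere (0 : EuclideanSpace ℝ (Fin n)) 1).tendsto_subseq husph
    have hvnorm : ‖v‖ = 1 := mem_sphere_zero_iff_norm.mp hvsph
    set σ : ℕ → ℕ := fun k => φ (ψ k) with hσ_def
    have hσmono : StrictMono σ := hφmono.comp hψmono
    set R : ℕ → ℝ := fun k => r (ψ k) with hR_def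
    set W : ℕ → EuclideanSpace ℝ (Fin n) := fun k => u (ψ k) with hW_def
    have hRpos : ∀ k, 0 < R k := fun k => hrpos (ψ k)
    have hRtop : Tendsto R atTop atTop := hrtop.comp hψmono.tendsto_atTop
    have hWlim' : Tendsto W atTop (nhds v) := hWlim
    have hxσ : ∀ k, x (σ k) = R k • W k := fun k =>
      (smul_inv_smul₀ (hRpos k).ne' _).symm
    have hqσ : Tendsto (fun k => q (σ k)) atTop (nhds p) :=
      hqlim.comp hσmono.tendsto_atTop
    -- (a) v ∈ recessionCone K
    have hvrec : v ∈ recessionCone K := by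
      intro z hz t ht
      rcases ht.eq_or_lt with h0 | htpos
      · simpa [← h0] using hz
      · have hev : ∀ᶠ k in atTop, (1 - t / R k) • z + t • W k ∈ K := by
          filter_upwards [hRtop.eventually_ge_atTop t] with k hk
          have hRk := hRpos k
          have h1 : (t / R k) • x (σ k) = t • W k := by
            rw [hxσ k, smul_smul, div_mul_cancel₀ _ hRk.ne']
          rw [← h1]
          refine hKconv hz (hxK (σ k)) ?_ (by positivity) (by ring)
          have : t / R k ≤ 1 := (div_le_one hRk).mpr hk
          linarith
        have hklim : Tendsto (fun k => (1 - t / R k) • z + t • W k) atTop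
            (nhds (((1:ℝ) - 0) • z + t • v)) := by
          apply Tendsto.add
          · have hcoef : Tendsto (fun k => 1 - t / R k) atTop (nhds (1 - 0)) := by
              apply tendsto_const_nhds.sub
              simpa [div_eq_mul_inv] using tendsto_const_nhds.mul hRtop.inv_tendsto_atTop
            exact hcoef.smul (tendsto_const_nhds (x := z))
          · exact hWlim'.const_smul t
        have := hKc.mem_of_tendsto hklim hev
        simpa using this
    -- the rescaled maps converge to the leading term
    have hRdinv : Tendsto (fun k => (R k ^ d)⁻¹) atTop (nhds 0) := by
      have : Tendsto (fun k => ((R k)⁻¹) ^ d) atTop (nhds 0) := by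
        simpa [zero_pow hd.ne'] using hRtop.inv_tendsto_atTop.pow d
      simpa [inv_pow] using this
    have hkey : Tendsto (fun k => (R k ^ d)⁻¹ • evalMap P (x (σ k))) atTop
        (nhds (evalMap (leadTerm d P) v)) := by
      have h1 := key_vector P hPdeg hRtop hRpos hWlim'
      have h2 : (fun k => (R k ^ d)⁻¹ • evalMap P (x (σ k)))
          = fun k => (R k ^ d)⁻¹ • evalMap P (R k • W k) := by
        funext k; rw [hxσ k]
      rw [h2]; exact h1
    have hvecq : Tendsto (fun k => (R k ^ d)⁻¹ • (evalMap P (x (σ k)) + q (σ k))) atTop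
        (nhds (evalMap (leadTerm d P) v)) := by
      have h3 : Tendsto (fun k => (R k ^ d)⁻¹ • q (σ k)) atTop
          (nhds ((0:ℝ) • p)) := hRdinv.smul hqσ
      have := hkey.add h3
      simp only [zero_smul, add_zero] at this
      simpa [smul_add] using this
    -- (b) ⟪p, v⟫ ≤ 0
    have hpv : ⟪p, v⟫ ≤ 0 := by
      have hterm : ∀ k, ⟪q (σ k), W k⟫ ≤ 0 := by
        intro k
        have : W k = (R k)⁻¹ • x (σ k) := rfl
        rw [this, real_inner_smul_right]
        exact mul_nonpos_of_nonneg_of_nonpos (inv_nonneg.mpr (hRpos k).le) (hqx (σ k))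
      have hlim2 : Tendsto (fun k => ⟪q (σ k), W k⟫) atTop (nhds ⟪p, v⟫) :=
        hqσ.inner hWlim'
      exact le_of_tendsto hlim2 (Eventually.of_forall hterm)
    -- (c1) : 0 ≤ ⟪L v, y⟫ for y in the recession cone
    have hA : ∀ y ∈ recessionCone K, 0 ≤ ⟪evalMap (leadTerm d P) v, y⟫ := by
      intro y hy
      have hstep : ∀ k, 0 ≤ ⟪(R k ^ d)⁻¹ • (evalMap P (x (σ k)) + q (σ k)), y⟫ := by
        intro k
        have hmem : x (σ k) + R k • y ∈ K := hy (x (σ k)) (hxK _) (R k) (hRpos k).le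
        have h := hVI (σ k) _ hmem
        rw [add_sub_cancel_left, real_inner_smul_right] at h
        have h' : 0 ≤ ⟪evalMap P (x (σ k)) + q (σ k), y⟫ :=
          nonneg_of_mul_nonneg_right h (hRpos k)
        rw [real_inner_smul_left]
        positivity
      have hlim3 : Tendsto (fun k => ⟪(R k ^ d)⁻¹ • (evalMap P (x (σ k)) + q (σ k)), y⟫)
          atTop (nhds ⟪evalMap (leadTerm d P) v, y⟫) := hvecq.inner tendsto_const_nhds
      exact ge_of_tendsto hlim3 (Eventually.of_forall hstep)
    -- (c2) : ⟪L v, v⟫ ≤ 0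
    have hB : ⟪evalMap (leadTerm d P) v, v⟫ ≤ 0 := by
      have hstep : ∀ k, ⟪(R k ^ d)⁻¹ • (evalMap P (x (σ k)) + q (σ k)), W k⟫ ≤ 0 := by
        intro k
        have : W k = (R k)⁻¹ • x (σ k) := rfl
        rw [this, real_inner_smul_left, real_inner_smul_right]
        have h1 := hineq1 (σ k)
        have h2 : (0:ℝ) ≤ (R k ^ d)⁻¹ := by positivity
        have h3 : (0:ℝ) ≤ (R k)⁻¹ := by positivity
        exact mul_nonpos_of_nonneg_of_nonpos h2 (mul_nonpos_of_nonneg_of_nonpos h3 h1)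
      have hlim4 : Tendsto (fun k => ⟪(R k ^ d)⁻¹ • (evalMap P (x (σ k)) + q (σ k)), W k⟫)
          atTop (nhds ⟪evalMap (leadTerm d P) v, v⟫) := hvecq.inner hWlim'
      exact le_of_tendsto hlim4 (Eventually.of_forall hstep)
    -- v solves the recession VI
    have hvSol : v ∈ Sol (recessionCone K) (evalMap (leadTerm d P)) := by
      refine ⟨hvrec, fun y hy => ?_⟩
      rw [inner_sub_right]
      have := hA y hy
      linarith
    -- contradiction with p ∈ interior of the dual cone
    rw [mem_interior_iff_mem_nhds, Metric.mem_nhds_iff] at hp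
    obtain ⟨ε, hε, hball⟩ := hp
    have hp' : p - (ε / 2) • v ∈
        dualCone (Sol (recessionCone K) (evalMap (leadTerm d P))) := by
      apply hball
      simp only [Metric.mem_ball, dist_eq_norm, sub_sub_cancel_left, norm_neg, norm_smul,
        hvnorm, mul_one, Real.norm_eq_abs, abs_of_pos (by positivity : (0:ℝ) < ε / 2)]
      linarith
    have h5 := hp' v hvSol
    rw [inner_sub_left, real_inner_smul_left, real_inner_self_eq_norm_sq, hvnorm] at h5
    have : (0:ℝ) < ε / 2 := by positivity
    nlinarith
end
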